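/- For every nonempty G_δ subset A of Baire space ℕ → ℕ there exists a continuous function f : (ℕ → ℕ) → (ℕ → ℕ) whose range is exactly A, such that f maps every open subset of ℕ → ℕ to a relatively open subset of A (in the subspace topology), and such that there exists a continuous function g : A → (ℕ → ℕ) (A with the subspace topology) with f (g x) = x for all x ∈ A. -/

import Mathlib

/-!
Write `A = ⋂ₖ Wₖ` with `Wₖ` open and decreasing, and let `cyl t` be the cylinder of sequences
extending the finite sequence `t`. Around each point `a ∈ A ∩ cyl t` take the shortest cylinder
strictly below `cyl t` that fits into `W |t|`; two such minimal cylinders are either equal or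
disjoint, so they partition `A ∩ cyl t` into countably many pieces. Enumerating the pieces
recursively attaches to every finite sequence `s` a finite sequence `code s`, monotone in `s`,
with `cyl (code (s ++ [n]))` running over the pieces of `A ∩ cyl (code s)`. The map
`x ↦ ⋂ₘ cyl (code (x|m))` is continuous, lands in `A`, and sends `cyl s` onto
`A ∩ cyl (code s)`, so it is open onto `A`. A section chooses at each stage the least index whose
piece contains the point; since the pieces are disjoint, this choice is the same on the whole
piece, which makes the section continuous.
-/

open Set

theorem IsGδ.exists_antitone_isOpen {X : Type*} [TopologicalSpace X] {A : Set X} (hA : IsGδ A) :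
    ∃ W : ℕ → Set X, (∀ k, IsOpen (W k)) ∧ Antitone W ∧ A = ⋂ k, W k := by
  obtain ⟨U, hU, rfl⟩ := hA.eq_iInter_nat
  exact ⟨dissipate U, fun k => (finite_le_nat k).isOpen_biInter fun j _ => hU j,
    antitone_dissipate, iInter_dissipate.symm⟩

namespace BaireGdelta

def res (x : ℕ → ℕ) (m : ℕ) : List ℕ := (List.range m).map x

@[simp] lemma length_res (x : ℕ → ℕ) (m : ℕ) : (res x m).length = m := by simp [res]

lemma res_succ (x : ℕ → ℕ) (m : ℕ) : res x (m + 1) = res x m ++ [x m] := by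
  simp [res, List.range_succ]

lemma take_res (x : ℕ → ℕ) {m m' : ℕ} (h : m ≤ m') : (res x m').take m = res x m := by
  rw [res, res, ← List.map_take, List.take_range, min_eq_left h]

lemma res_prefix_res (x : ℕ → ℕ) {m m' : ℕ} (h : m ≤ m') : res x m <+: res x m' := by
  rw [List.prefix_iff_eq_take, length_res, take_res x h]

lemma res_eq_res_iff {x y : ℕ → ℕ} {m : ℕ} : res y m = res x m ↔ ∀ i < m, y i = x i := by
  simp [res, List.map_inj_left]

lemma res_getD (t : List ℕ) : res (fun i => t.getD i 0) t.length = t := by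
  apply List.ext_getElem (by simp)
  intro i _ hi
  simp [res, hi]

def cyl (t : List ℕ) : Set (ℕ → ℕ) := {y | res y t.length = t}

lemma mem_cyl_nil (y : ℕ → ℕ) : y ∈ cyl [] := rfl

lemma mem_cyl_res {x y : ℕ → ℕ} {m : ℕ} : y ∈ cyl (res x m) ↔ res y m = res x m := by
  simp [cyl]

lemma mem_cyl_res_self (x : ℕ → ℕ) (m : ℕ) : x ∈ cyl (res x m) := mem_cyl_res.2 rfl

lemma mem_cyl_iff {y : ℕ → ℕ} {t : List ℕ} : y ∈ cyl t ↔ ∀ i < t.length, y i = t.getD i 0 := by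
  conv_lhs => rw [← res_getD t]
  rw [mem_cyl_res, res_eq_res_iff]

lemma cyl_res_eq_cylinder (x : ℕ → ℕ) (m : ℕ) : cyl (res x m) = PiNat.cylinder x m := by
  ext y
  rw [mem_cyl_res, res_eq_res_iff, PiNat.mem_cylinder_iff]

lemma isLocallyConstant_res (m : ℕ) : IsLocallyConstant (res · m) :=
  (IsLocallyConstant.iff_exists_open _).2 fun x => ⟨cyl (res x m),
    cyl_res_eq_cylinder x m ▸ PiNat.isOpen_cylinder _ x m, mem_cyl_res_self x m,
    fun _ hy => mem_cyl_res.1 hy⟩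

lemma isOpen_cyl (t : List ℕ) : IsOpen (cyl t) :=
  (isLocallyConstant_res t.length).isOpen_fiber t

lemma cyl_anti {t t' : List ℕ} (h : t <+: t') : cyl t' ⊆ cyl t := fun y (hy : _ = t') => by
  show res y t.length = t
  rw [← take_res y h.length_le, hy, ← List.prefix_iff_eq_take.1 h]

lemma prefix_of_mem_cyl {y : ℕ → ℕ} {t t' : List ℕ} (ht : y ∈ cyl t) (ht' : y ∈ cyl t')
    (h : t.length ≤ t'.length) : t <+: t' :=
  ht ▸ ht' ▸ res_prefix_res y h

lemma exists_cyl_res_subset {O : Set (ℕ → ℕ)} (hO : IsOpen O) {x : ℕ → ℕ} (hx : x ∈ O) :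
    ∃ m, cyl (res x m) ⊆ O := by
  obtain ⟨_, ⟨y, m, rfl⟩, hxy, hsub⟩ :=
    (PiNat.isTopologicalBasis_cylinders fun _ => ℕ).exists_subset_of_mem_open hx hO
  exact ⟨m, by rwa [cyl_res_eq_cylinder, PiNat.mem_cylinder_iff_eq.1 hxy]⟩

lemma eq_biUnion_cyl_of_isOpen {O : Set (ℕ → ℕ)} (hO : IsOpen O) :
    O = ⋃ (t : List ℕ) (_ : cyl t ⊆ O), cyl t := by
  refine Subset.antisymm (fun x hx => ?_) (iUnion₂_subset fun _ h => h)
  obtain ⟨m, hm⟩ := exists_cyl_res_subset hO hx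
  exact mem_biUnion hm (mem_cyl_res_self x m)

def limitPoint (L : ℕ → List ℕ) : ℕ → ℕ := fun i => (L (i + 1)).getD i 0

lemma eq_limitPoint {L : ℕ → List ℕ} (hlen : ∀ m, m ≤ (L m).length) {y : ℕ → ℕ}
    (hy : ∀ m, y ∈ cyl (L m)) : y = limitPoint L :=
  funext fun i => mem_cyl_iff.1 (hy (i + 1)) i (hlen (i + 1))

lemma getD_eq_getD_of_prefix {t t' : List ℕ} (h : t <+: t') {i : ℕ} (hi : i < t.length) :
    t.getD i 0 = t'.getD i 0 := by
  rw [List.getD_eq_getElem _ 0 hi, List.getD_eq_getElem _ 0 (hi.trans_le h.length_le),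
    h.getElem hi]

lemma limitPoint_mem_cyl {L : ℕ → List ℕ} (hL : ∀ ⦃m m'⦄, m ≤ m' → L m <+: L m')
    (hlen : ∀ m, m ≤ (L m).length) (m : ℕ) : limitPoint L ∈ cyl (L m) := by
  refine mem_cyl_iff.2 fun i hi => ?_
  rcases le_total (i + 1) m with h | h
  · exact getD_eq_getD_of_prefix (hL h) (hlen (i + 1))
  · exact (getD_eq_getD_of_prefix (hL h) hi).symm

-- The offset keeps the level above `ℓ` even where the set is empty and `sInf` returns `0`.
noncomputable def entryLevel (V : Set (ℕ → ℕ)) (ℓ : ℕ) (a : ℕ → ℕ) : ℕ :=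
  ℓ + 1 + sInf {j | cyl (res a (ℓ + 1 + j)) ⊆ V}

lemma lt_entryLevel (V : Set (ℕ → ℕ)) (ℓ : ℕ) (a : ℕ → ℕ) : ℓ < entryLevel V ℓ a := by
  unfold entryLevel; omega

lemma cyl_res_entryLevel_subset {V : Set (ℕ → ℕ)} (hV : IsOpen V) {a : ℕ → ℕ} (ha : a ∈ V)
    (ℓ : ℕ) : cyl (res a (entryLevel V ℓ a)) ⊆ V := by
  obtain ⟨m, hm⟩ := exists_cyl_res_subset hV ha
  exact Nat.sInf_mem (s := {j | cyl (res a (ℓ + 1 + j)) ⊆ V})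
    ⟨m, (cyl_anti (res_prefix_res a (by omega))).trans hm⟩

lemma entryLevel_eq_of_mem_cyl {V : Set (ℕ → ℕ)} (hV : IsOpen V) {a b : ℕ → ℕ} (ha : a ∈ V)
    {ℓ : ℕ} (hb : b ∈ cyl (res a (entryLevel V ℓ a))) : entryLevel V ℓ b = entryLevel V ℓ a := by
  let S : (ℕ → ℕ) → Set ℕ := fun c => {j | cyl (res c (ℓ + 1 + j)) ⊆ V}
  have hagree : ∀ j ≤ sInf (S a), j ∈ S b ↔ j ∈ S a := by
    intro j hj
    have hj' : ℓ + 1 + j ≤ entryLevel V ℓ a := show _ ≤ ℓ + 1 + sInf (S a) by omega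
    show cyl (res b _) ⊆ V ↔ cyl (res a _) ⊆ V
    rw [← take_res b hj', mem_cyl_res.1 hb, take_res a hj']
  have hb₀ : sInf (S a) ∈ S b := (hagree _ le_rfl).2 (cyl_res_entryLevel_subset hV ha ℓ)
  have hle : sInf (S b) ≤ sInf (S a) := Nat.sInf_le hb₀
  have hge : sInf (S a) ≤ sInf (S b) := Nat.sInf_le ((hagree _ hle).1 (Nat.sInf_mem ⟨_, hb₀⟩))
  show ℓ + 1 + sInf (S b) = ℓ + 1 + sInf (S a)
  omega

def pieces (A V : Set (ℕ → ℕ)) (t : List ℕ) : Set (List ℕ) :=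
  (fun a => res a (entryLevel V t.length a)) '' (A ∩ cyl t)

section Pieces

variable {A V : Set (ℕ → ℕ)} {t t' : List ℕ}

lemma prefix_of_mem_pieces (ht' : t' ∈ pieces A V t) : t <+: t' ∧ t.length < t'.length := by
  obtain ⟨a, ⟨-, hat⟩, rfl⟩ := ht'
  have hlt := lt_entryLevel V t.length a
  exact ⟨prefix_of_mem_cyl hat (mem_cyl_res_self a _) (by simpa using hlt.le), by simpa using hlt⟩

lemma inter_cyl_nonempty_of_mem_pieces (ht' : t' ∈ pieces A V t) : (A ∩ cyl t').Nonempty := by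
  obtain ⟨a, ⟨haA, -⟩, rfl⟩ := ht'
  exact ⟨a, haA, mem_cyl_res_self a _⟩

lemma cyl_subset_of_mem_pieces (hV : IsOpen V) (hAV : A ⊆ V) (ht' : t' ∈ pieces A V t) :
    cyl t' ⊆ V := by
  obtain ⟨a, ⟨haA, -⟩, rfl⟩ := ht'
  exact cyl_res_entryLevel_subset hV (hAV haA) _

lemma exists_mem_pieces {a : ℕ → ℕ} (ha : a ∈ A ∩ cyl t) : ∃ t' ∈ pieces A V t, a ∈ cyl t' :=
  ⟨_, ⟨a, ha, rfl⟩, mem_cyl_res_self a _⟩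

lemma eq_of_mem_pieces (hV : IsOpen V) (hAV : A ⊆ V) {t₁ t₂ : List ℕ} (h₁ : t₁ ∈ pieces A V t)
    (h₂ : t₂ ∈ pieces A V t) {b : ℕ → ℕ} (hb₁ : b ∈ cyl t₁) (hb₂ : b ∈ cyl t₂) : t₁ = t₂ := by
  suffices key : ∀ t' ∈ pieces A V t, b ∈ cyl t' → t' = res b (entryLevel V t.length b) from
    (key t₁ h₁ hb₁).trans (key t₂ h₂ hb₂).symm
  rintro _ ⟨a, ⟨haA, -⟩, rfl⟩ hb
  rw [entryLevel_eq_of_mem_cyl hV (hAV haA) hb, (mem_cyl_res.1 hb)]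

end Pieces

section Scheme

variable (A : Set (ℕ → ℕ)) (W : ℕ → Set (ℕ → ℕ))

-- Refining inside `W t.length` rather than `W s.length` makes `code` a plain fold; this is why
-- `W` is taken antitone. The junk value `t ++ [0]` makes `t <+: extension A W t n` unconditional.
open Classical in
noncomputable def extension (t : List ℕ) (n : ℕ) : List ℕ :=
  if (A ∩ cyl t).Nonempty then
    enumerateCountable (pieces A (W t.length) t).to_countable
      (Classical.epsilon (· ∈ pieces A (W t.length) t)) n
  else t ++ [0]

noncomputable def code (s : List ℕ) : List ℕ := s.foldl (extension A W) []

noncomputable def schemeMap (x : ℕ → ℕ) : ℕ → ℕ := limitPoint fun m => code A W (res x m)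

noncomputable def greedyIndex (a : ℕ → ℕ) (t : List ℕ) : ℕ := sInf {n | a ∈ cyl (extension A W t n)}

noncomputable def greedyPath (a : ℕ → ℕ) (s : List ℕ) (k : ℕ) : List ℕ :=
  (fun p => p ++ [greedyIndex A W a (code A W p)])^[k] s

noncomputable def greedyLift (a : ℕ → ℕ) (s : List ℕ) : ℕ → ℕ := limitPoint (greedyPath A W a s)

variable {A W}

lemma extension_mem_pieces {t : List ℕ} (ht : (A ∩ cyl t).Nonempty) (n : ℕ) :
    extension A W t n ∈ pieces A (W t.length) t := by
  rw [extension, if_pos ht]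
  exact enumerateCountable_mem _ (Classical.epsilon_spec (ht.image _)) n

lemma prefix_extension (t : List ℕ) (n : ℕ) :
    t <+: extension A W t n ∧ t.length < (extension A W t n).length := by
  by_cases ht : (A ∩ cyl t).Nonempty
  · exact prefix_of_mem_pieces (extension_mem_pieces ht n)
  · rw [extension, if_neg ht]
    exact ⟨List.prefix_append _ _, by simp⟩

lemma exists_mem_cyl_extension {a : ℕ → ℕ} {t : List ℕ} (ha : a ∈ A ∩ cyl t) :
    ∃ n, a ∈ cyl (extension A W t n) := by
  obtain ⟨t', ht', hat'⟩ := exists_mem_pieces (V := W t.length) ha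
  obtain ⟨n, hn⟩ := subset_range_enumerate _ _ ht'
  exact ⟨n, by rwa [extension, if_pos ⟨a, ha⟩, hn]⟩

lemma code_append_singleton (s : List ℕ) (n : ℕ) :
    code A W (s ++ [n]) = extension A W (code A W s) n :=
  List.foldl_concat _ _ _ _

lemma prefix_foldl_extension (r t : List ℕ) :
    t <+: r.foldl (extension A W) t ∧ t.length + r.length ≤ (r.foldl (extension A W) t).length := by
  induction r generalizing t with
  | nil => simp
  | cons n r ih =>
    obtain ⟨hpre, hlen⟩ := prefix_extension (A := A) (W := W) t n
    obtain ⟨ihpre, ihlen⟩ := ih (extension A W t n)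
    exact ⟨hpre.trans ihpre, by simp only [List.foldl_cons, List.length_cons]; omega⟩

lemma code_prefix_code {s s' : List ℕ} (h : s <+: s') : code A W s <+: code A W s' := by
  obtain ⟨r, rfl⟩ := h
  simp only [code, List.foldl_append]
  exact (prefix_foldl_extension r _).1

lemma length_le_length_code (s : List ℕ) : s.length ≤ (code A W s).length := by
  simpa [code] using (prefix_foldl_extension (A := A) (W := W) s []).2

lemma inter_cyl_code_nonempty (hne : A.Nonempty) (s : List ℕ) :
    (A ∩ cyl (code A W s)).Nonempty := by
  induction s using List.reverseRecOn with
  | nil => exact ⟨hne.some, hne.some_mem, mem_cyl_nil _⟩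
  | append_singleton s n ih =>
    rw [code_append_singleton]
    exact inter_cyl_nonempty_of_mem_pieces (extension_mem_pieces ih n)

lemma schemeMap_mem_cyl_code (x : ℕ → ℕ) (m : ℕ) : schemeMap A W x ∈ cyl (code A W (res x m)) :=
  limitPoint_mem_cyl (fun _ _ h => code_prefix_code (res_prefix_res x h))
    (fun m => by simpa using length_le_length_code (res x m)) m

lemma schemeMap_mem (hW : ∀ k, IsOpen (W k)) (hAW : ∀ k, A ⊆ W k) (hanti : Antitone W)
    (hWA : ⋂ k, W k ⊆ A) (hne : A.Nonempty) (x : ℕ → ℕ) : schemeMap A W x ∈ A := by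
  refine hWA (mem_iInter.2 fun k => ?_)
  have hmem := schemeMap_mem_cyl_code (A := A) (W := W) x (k + 1)
  rw [res_succ, code_append_singleton] at hmem
  have hk : k ≤ (code A W (res x k)).length := by simpa using length_le_length_code (res x k)
  exact hanti hk (cyl_subset_of_mem_pieces (hW _) (hAW _)
    (extension_mem_pieces (inter_cyl_code_nonempty hne _) _) hmem)

lemma continuous_schemeMap : Continuous (schemeMap A W) :=
  continuous_pi fun i =>
    ((isLocallyConstant_res (i + 1)).comp fun s => (code A W s).getD i 0).continuous

lemma mem_cyl_extension_greedyIndex_of_mem {a : ℕ → ℕ} {t : List ℕ} {n : ℕ}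
    (ha : a ∈ cyl (extension A W t n)) : a ∈ cyl (extension A W t (greedyIndex A W a t)) :=
  Nat.sInf_mem (s := {n | a ∈ cyl (extension A W t n)}) ⟨n, ha⟩

lemma mem_cyl_extension_greedyIndex {a : ℕ → ℕ} {t : List ℕ} (ha : a ∈ A ∩ cyl t) :
    a ∈ cyl (extension A W t (greedyIndex A W a t)) :=
  (exists_mem_cyl_extension ha).elim fun _ => mem_cyl_extension_greedyIndex_of_mem

lemma greedyIndex_eq_of_mem_cyl (hW : ∀ k, IsOpen (W k)) (hAW : ∀ k, A ⊆ W k) {a b : ℕ → ℕ}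
    {t : List ℕ} (ha : a ∈ A ∩ cyl t) (hb : b ∈ cyl (extension A W t (greedyIndex A W a t))) :
    greedyIndex A W b t = greedyIndex A W a t := by
  have hle : greedyIndex A W b t ≤ greedyIndex A W a t := Nat.sInf_le hb
  have hsame : extension A W t (greedyIndex A W b t) = extension A W t (greedyIndex A W a t) :=
    eq_of_mem_pieces (hW _) (hAW _) (extension_mem_pieces ⟨a, ha⟩ _)
      (extension_mem_pieces ⟨a, ha⟩ _) (mem_cyl_extension_greedyIndex_of_mem hb) hb
  have hge : greedyIndex A W a t ≤ greedyIndex A W b t :=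
    Nat.sInf_le (show a ∈ cyl _ from hsame ▸ mem_cyl_extension_greedyIndex ha)
  omega

lemma greedyPath_succ (a : ℕ → ℕ) (s : List ℕ) (k : ℕ) :
    greedyPath A W a s (k + 1) =
      greedyPath A W a s k ++ [greedyIndex A W a (code A W (greedyPath A W a s k))] :=
  Function.iterate_succ_apply' _ _ _

lemma length_greedyPath (a : ℕ → ℕ) (s : List ℕ) (k : ℕ) :
    (greedyPath A W a s k).length = s.length + k := by
  induction k with
  | zero => rfl
  | succ k ih => rw [greedyPath_succ, List.length_append, ih]; rfl

lemma greedyPath_prefix (a : ℕ → ℕ) (s : List ℕ) {k k' : ℕ} (h : k ≤ k') :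
    greedyPath A W a s k <+: greedyPath A W a s k' := by
  induction k', h using Nat.le_induction with
  | base => exact List.prefix_refl _
  | succ k' _ ih => exact ih.trans (greedyPath_succ a s k' ▸ List.prefix_append _ _)

lemma mem_cyl_code_greedyPath {a : ℕ → ℕ} {s : List ℕ} (ha : a ∈ A) (has : a ∈ cyl (code A W s))
    (k : ℕ) : a ∈ cyl (code A W (greedyPath A W a s k)) := by
  induction k with
  | zero => exact has
  | succ k ih =>
    rw [greedyPath_succ, code_append_singleton]
    exact mem_cyl_extension_greedyIndex ⟨ha, ih⟩

lemma greedyLift_mem_cyl (a : ℕ → ℕ) (s : List ℕ) (k : ℕ) :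
    greedyLift A W a s ∈ cyl (greedyPath A W a s k) :=
  limitPoint_mem_cyl (fun _ _ => greedyPath_prefix a s) (fun k => by simp [length_greedyPath]) k

lemma schemeMap_greedyLift {a : ℕ → ℕ} {s : List ℕ} (ha : a ∈ A) (has : a ∈ cyl (code A W s)) :
    schemeMap A W (greedyLift A W a s) = a := by
  refine (eq_limitPoint (fun m => by simpa using length_le_length_code (A := A) (W := W) (res _ m))
    fun m => ?_).symm
  have hres : res (greedyLift A W a s) (s.length + m) = greedyPath A W a s m := by
    simpa [cyl, length_greedyPath] using greedyLift_mem_cyl (A := A) (W := W) a s m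
  refine cyl_anti (code_prefix_code ?_) (mem_cyl_code_greedyPath ha has m)
  exact hres ▸ res_prefix_res _ (by omega)

lemma image_schemeMap_cyl (hW : ∀ k, IsOpen (W k)) (hAW : ∀ k, A ⊆ W k) (hanti : Antitone W)
    (hWA : ⋂ k, W k ⊆ A) (hne : A.Nonempty) (s : List ℕ) :
    schemeMap A W '' cyl s = cyl (code A W s) ∩ A := by
  refine Subset.antisymm ?_ fun a ⟨has, ha⟩ =>
    ⟨_, greedyLift_mem_cyl a s 0, schemeMap_greedyLift ha has⟩
  rintro _ ⟨y, hy, rfl⟩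
  refine ⟨?_, schemeMap_mem hW hAW hanti hWA hne y⟩
  simpa [show res y s.length = s from hy] using schemeMap_mem_cyl_code (A := A) (W := W) y s.length

lemma image_schemeMap_of_isOpen (hW : ∀ k, IsOpen (W k)) (hAW : ∀ k, A ⊆ W k)
    (hanti : Antitone W) (hWA : ⋂ k, W k ⊆ A) (hne : A.Nonempty) {O : Set (ℕ → ℕ)}
    (hO : IsOpen O) :
    schemeMap A W '' O = (⋃ (s : List ℕ) (_ : cyl s ⊆ O), cyl (code A W s)) ∩ A := by
  conv_lhs => rw [eq_biUnion_cyl_of_isOpen hO]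
  simp only [image_iUnion₂, image_schemeMap_cyl hW hAW hanti hWA hne, iUnion₂_inter]

lemma greedyPath_eq_of_mem_cyl (hW : ∀ k, IsOpen (W k)) (hAW : ∀ k, A ⊆ W k) {a b : ℕ → ℕ}
    {s : List ℕ} (ha : a ∈ A) (has : a ∈ cyl (code A W s)) {k : ℕ}
    (hb : b ∈ cyl (code A W (greedyPath A W a s k))) :
    greedyPath A W b s k = greedyPath A W a s k := by
  induction k with
  | zero => rfl
  | succ k ih =>
    have hb' : b ∈ cyl (code A W (greedyPath A W a s k)) :=
      cyl_anti (code_prefix_code (greedyPath_prefix a s k.le_succ)) hb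
    rw [greedyPath_succ, code_append_singleton] at hb
    rw [greedyPath_succ, greedyPath_succ, ih hb',
      greedyIndex_eq_of_mem_cyl hW hAW ⟨ha, mem_cyl_code_greedyPath ha has k⟩ hb]

lemma continuous_greedyLift_nil (hW : ∀ k, IsOpen (W k)) (hAW : ∀ k, A ⊆ W k) :
    Continuous fun a : A => greedyLift A W a [] := by
  refine continuous_pi fun i => IsLocallyConstant.continuous ?_
  refine (IsLocallyConstant.iff_exists_open _).2 fun a =>
    ⟨Subtype.val ⁻¹' cyl (code A W (greedyPath A W a [] (i + 1))),
      (isOpen_cyl _).preimage continuous_subtype_val,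
      mem_cyl_code_greedyPath a.2 (mem_cyl_nil _) _, fun b hb => ?_⟩
  simp only [greedyLift, limitPoint]
  rw [greedyPath_eq_of_mem_cyl hW hAW a.2 (mem_cyl_nil _) hb]

end Scheme

end BaireGdelta

open BaireGdelta in
theorem exists_open_continuous_surjection_onto_Gdelta
    (A : Set (ℕ → ℕ)) (hne : A.Nonempty) (hGδ : IsGδ A) :
    ∃ f : (ℕ → ℕ) → (ℕ → ℕ), Continuous f ∧ Set.range f = A ∧
      (∀ U : Set (ℕ → ℕ), IsOpen U → ∃ V : Set (ℕ → ℕ), IsOpen V ∧ f '' U = V ∩ A) ∧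
      ∃ g : A → (ℕ → ℕ), Continuous g ∧ ∀ x : A, f (g x) = (x : ℕ → ℕ) := by
  obtain ⟨W, hW, hanti, hA⟩ := hGδ.exists_antitone_isOpen
  have hAW : ∀ k, A ⊆ W k := fun k => hA.subset.trans (iInter_subset W k)
  have hWA : ⋂ k, W k ⊆ A := hA.superset
  have hlift : ∀ a ∈ A, schemeMap A W (greedyLift A W a []) = a := fun a ha =>
    schemeMap_greedyLift ha (mem_cyl_nil a)
  refine ⟨schemeMap A W, continuous_schemeMap, ?_,
    fun O hO => ⟨_, isOpen_biUnion fun s _ => isOpen_cyl _,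
      image_schemeMap_of_isOpen hW hAW hanti hWA hne hO⟩,
    fun a => greedyLift A W a [], continuous_greedyLift_nil hW hAW, fun a => hlift a a.2⟩
  exact Subset.antisymm (range_subset_iff.2 (schemeMap_mem hW hAW hanti hWA hne))
    fun a ha => ⟨_, hlift a ha⟩
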